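/- arXiv:alg-geom/9703030 — 3 statements merged into one kernel-verified Lean document; each statement's English description precedes it below -/
import Mathlib

section
/- The map sending t_i to 1 - x_i and t_i^{-1} to the power series ∑_{k≥0} x_i^k extends to an injective ring homomorphism from the Laurent polynomial ring Λ = ℤ[t_1^{±1},...,t_n^{±1}] into the formal power series ring P = ℤ[[x_1,...,x_n]] (the Magnus embedding). -/
open MonoidAlgebra

/-- The `i`-th standard generator `t_i` of the group ring
`Λ = ℤ[t_1^{±1},…,t_n^{±1}]` of the free abelian group `ℤ^n`. -/
noncomputable def laurentGen (n : ℕ) (i : Fin n) :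
    MonoidAlgebra ℤ (Multiplicative (Fin n → ℤ)) :=
  MonoidAlgebra.of ℤ (Multiplicative (Fin n → ℤ)) (Multiplicative.ofAdd (Pi.single i 1))

/-!
Each `1 - x_i` is a unit of `R[[x]]`, its inverse being the geometric series in `x_i`, so
`t_i ↦ 1 - x_i` extends from `ℤ^σ` to the group ring `R[ℤ^σ]`. For injectivity, multiplying a
Laurent polynomial by a suitable monomial `t^m`, a unit, turns it into an honest polynomial; on
polynomials the map is the substitution `x_i ↦ 1 - x_i`, an involution of `R[x]`, followed by the
inclusion `R[x] ⊆ R[[x]]`.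
-/

theorem Finsupp.support_subset_singleton_iff_forall_ne {σ M : Type*} [Zero M] {d : σ →₀ M}
    {i : σ} : d.support ⊆ {i} ↔ ∀ j ≠ i, d j = 0 := by
  simp only [Finset.subset_singleton_iff', Finsupp.mem_support_iff]
  exact forall_congr' fun j => not_imp_comm

namespace MvPowerSeries

variable {σ R : Type*} [CommRing R] [DecidableEq σ]

def geomSeriesX (i : σ) : MvPowerSeries σ R :=
  fun d => if d.support ⊆ {i} then 1 else 0

theorem coeff_geomSeriesX (i : σ) (d : σ →₀ ℕ) :
    coeff d (geomSeriesX (R := R) i) = if d.support ⊆ {i} then 1 else 0 := rfl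

theorem one_sub_X_mul_geomSeriesX (i : σ) : (1 - X i) * geomSeriesX (R := R) i = 1 := by
  ext d
  have coeff_X_mul (f : MvPowerSeries σ R) : coeff d (X i * f) =
      if Finsupp.single i 1 ≤ d then coeff (d - Finsupp.single i 1) f else 0 := by
    rw [X, coeff_monomial_mul, one_mul]
  have support_tsub : (d - Finsupp.single i 1).support ⊆ {i} ↔ d.support ⊆ {i} := by
    simp only [Finsupp.support_subset_singleton_iff_forall_ne, Finsupp.tsub_apply]
    exact forall₂_congr fun j hj => by rw [Finsupp.single_eq_of_ne hj, tsub_zero]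
  rw [sub_mul, one_mul, map_sub, coeff_X_mul, coeff_one, coeff_geomSeriesX, coeff_geomSeriesX]
  simp only [support_tsub]
  by_cases hi : Finsupp.single i 1 ≤ d
  · have hd : d ≠ 0 := by rintro rfl; simp at hi
    simp [hi, hd]
  · have support_iff : d.support ⊆ {i} ↔ d = 0 := by
      rw [Finsupp.single_le_iff, not_le, Nat.lt_one_iff] at hi
      rw [Finsupp.support_subset_singleton, hi, Finsupp.single_zero]
    simp [hi, support_iff]

noncomputable def oneSubXUnit (i : σ) : (MvPowerSeries σ R)ˣ :=
  ⟨1 - X i, geomSeriesX i, one_sub_X_mul_geomSeriesX i,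
    by rw [mul_comm, one_sub_X_mul_geomSeriesX]⟩

end MvPowerSeries

def piZPowHom {σ M : Type*} [Fintype σ] [CommGroup M] (u : σ → M) :
    Multiplicative (σ → ℤ) →* M where
  toFun v := ∏ i, u i ^ v.toAdd i
  map_one' := by simp
  map_mul' v w := by
    simp only [toAdd_mul, Pi.add_apply, zpow_add, Finset.prod_mul_distrib]

theorem piZPowHom_ofAdd_single {σ M : Type*} [Fintype σ] [CommGroup M] [DecidableEq σ]
    (u : σ → M) (i : σ) : piZPowHom u (Multiplicative.ofAdd (Pi.single i 1)) = u i := by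
  simp [piZPowHom, Pi.single_apply]

namespace MvPolynomial

variable {σ R : Type*} [CommRing R]

theorem aeval_one_sub_X_injective :
    Function.Injective (aeval (R := R) fun i : σ => (1 - X i : MvPolynomial σ R)) := by
  set e := aeval (R := R) fun i : σ => (1 - X i : MvPolynomial σ R)
  have involutive : e.comp e = AlgHom.id R _ := algHom_ext fun i => by simp [e]
  exact Function.LeftInverse.injective (g := e) fun p => AlgHom.congr_fun involutive p

variable [DecidableEq σ]

noncomputable def toLaurent : MvPolynomial σ R →ₐ[R] MonoidAlgebra R (Multiplicative (σ → ℤ)) :=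
  aeval fun i => of R _ (Multiplicative.ofAdd (Pi.single i 1))

variable [Fintype σ]

theorem toLaurent_monomial (m : σ →₀ ℕ) :
    toLaurent (monomial m (1 : R)) = of R _ (Multiplicative.ofAdd fun i => (m i : ℤ)) := by
  rw [toLaurent, aeval_monomial, map_one, one_mul, Finsupp.prod_pow]
  simp only [← map_pow, ← map_prod]
  congr 1
  ext i
  simp [Finset.sum_apply, Pi.single_apply]

theorem isUnit_toLaurent_monomial (m : σ →₀ ℕ) : IsUnit (toLaurent (monomial m (1 : R))) := by
  rw [toLaurent_monomial]
  exact (Group.isUnit _).map _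

theorem exists_mul_toLaurent_monomial_eq_toLaurent
    (x : MonoidAlgebra R (Multiplicative (σ → ℤ))) :
    ∃ (m : σ →₀ ℕ) (p : MvPolynomial σ R), x * toLaurent (monomial m 1) = toLaurent p := by
  induction x using MonoidAlgebra.induction_on with
  | of g =>
    refine ⟨Finsupp.equivFunOnFinite.symm fun i => (-g.toAdd i).toNat,
      monomial (Finsupp.equivFunOnFinite.symm fun i => (g.toAdd i).toNat) 1, ?_⟩
    rw [toLaurent_monomial, toLaurent_monomial, ← map_mul]
    congr 1
    ext i
    simp only [toAdd_mul, toAdd_ofAdd, Pi.add_apply, Finsupp.coe_equivFunOnFinite_symm]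
    omega
  | add x y hx hy =>
    obtain ⟨a, p, hp⟩ := hx
    obtain ⟨b, q, hq⟩ := hy
    refine ⟨a + b, p * monomial b 1 + q * monomial a 1, ?_⟩
    rw [← mul_one (1 : R), ← monomial_mul, mul_one]
    simp only [map_add, map_mul]
    linear_combination toLaurent (monomial b (1 : R)) * hp + toLaurent (monomial a (1 : R)) * hq
  | smul r x hx =>
    obtain ⟨m, p, hp⟩ := hx
    exact ⟨m, r • p, by rw [smul_mul_assoc, hp, map_smul]⟩

theorem injective_of_injective_comp_toLaurent {A : Type*} [Semiring A] [Algebra R A]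
    (f : MonoidAlgebra R (Multiplicative (σ → ℤ)) →ₐ[R] A)
    (hf : Function.Injective (f.comp toLaurent)) : Function.Injective f := by
  rw [injective_iff_map_eq_zero]
  intro x hx
  obtain ⟨m, p, hp⟩ := exists_mul_toLaurent_monomial_eq_toLaurent x
  have hp0 : p = 0 := hf <| by simp [← hp, hx]
  rw [hp0, map_zero] at hp
  exact (isUnit_toLaurent_monomial m).mul_left_eq_zero.mp hp

end MvPolynomial

section Magnus

variable {σ R : Type*} [CommRing R] [DecidableEq σ] [Fintype σ]

noncomputable def magnus : MonoidAlgebra R (Multiplicative (σ → ℤ)) →ₐ[R] MvPowerSeries σ R :=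
  MonoidAlgebra.lift R _ _ ((Units.coeHom _).comp (piZPowHom MvPowerSeries.oneSubXUnit))

theorem magnus_of_single (i : σ) :
    magnus (of R _ (Multiplicative.ofAdd (Pi.single i 1))) = 1 - MvPowerSeries.X i := by
  simp [magnus, piZPowHom_ofAdd_single, MvPowerSeries.oneSubXUnit]

theorem magnus_of_single_inv (i : σ) :
    magnus (of R _ (Multiplicative.ofAdd (Pi.single i 1))⁻¹) = MvPowerSeries.geomSeriesX i := by
  simp [magnus, piZPowHom_ofAdd_single, MvPowerSeries.oneSubXUnit]

theorem magnus_comp_toLaurent :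
    (magnus (σ := σ) (R := R)).comp MvPolynomial.toLaurent =
      (MvPolynomial.coeToMvPowerSeries.algHom R).comp
        (MvPolynomial.aeval fun i => 1 - MvPolynomial.X i) :=
  MvPolynomial.algHom_ext fun i => by
    simp only [AlgHom.comp_apply, MvPolynomial.toLaurent, MvPolynomial.aeval_X, magnus_of_single]
    rw [map_sub, map_one]
    simp

theorem magnus_injective : Function.Injective (magnus (σ := σ) (R := R)) := by
  refine MvPolynomial.injective_of_injective_comp_toLaurent _ ?_
  rw [magnus_comp_toLaurent, AlgHom.coe_comp]
  refine Function.Injective.comp (fun p q h => ?_) MvPolynomial.aeval_one_sub_X_injective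
  simpa using h

end Magnus

/-- The Magnus embedding: the assignment `t_i ↦ 1 - x_i` (with `t_i^{-1}` going to the
geometric series `∑_{k≥0} x_i^k`) extends to an injective ring homomorphism from the
Laurent polynomial ring `Λ = ℤ[t_1^{±1},…,t_n^{±1}]` (the group ring of `ℤ^n`) into the
formal power series ring `P = ℤ[[x_1,…,x_n]]`. -/
theorem magnus_embedding_exists (n : ℕ) :
    ∃ φ : MonoidAlgebra ℤ (Multiplicative (Fin n → ℤ)) →+* MvPowerSeries (Fin n) ℤ,
      Function.Injective φ ∧
      (∀ i : Fin n, φ (laurentGen n i) = 1 - MvPowerSeries.X i) ∧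
      (∀ (i : Fin n) (d : Fin n →₀ ℕ),
        MvPowerSeries.coeff d
          (φ (MonoidAlgebra.of ℤ (Multiplicative (Fin n → ℤ))
            (Multiplicative.ofAdd (Pi.single i 1))⁻¹)) =
          if d.support ⊆ {i} then 1 else 0) :=
  ⟨magnus.toRingHom, magnus_injective, fun i => magnus_of_single i, fun i d =>
    (congrArg (MvPowerSeries.coeff d) (magnus_of_single_inv i)).trans
      (MvPowerSeries.coeff_geomSeriesX i d)⟩
end

section
/- Chain rule of Fox calculus: for endomorphisms α, β of the free group F_n, the Fox Jacobians satisfy J(α·β) = β̃(J(α)) · J(β), where α·β denotes β ∘ α and β̃ is the extension of β to the group ring applied entrywise. -/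
/-- The augmentation map `ε : ℤF_n → ℤ`. -/
noncomputable def augFree (n : ℕ) : MonoidAlgebra ℤ (FreeGroup (Fin n)) →ₐ[ℤ] ℤ :=
  (MonoidAlgebra.lift ℤ ℤ (FreeGroup (Fin n))) 1

/-- A family `d : Fin n → ℤF_n` is the Fox gradient of `w ∈ ℤF_n` if it satisfies the
fundamental formula `w - ε(w) = ∑_i d_i (t_i - 1)`. -/
def IsFoxGradient (n : ℕ) (w : MonoidAlgebra ℤ (FreeGroup (Fin n)))
    (d : Fin n → MonoidAlgebra ℤ (FreeGroup (Fin n))) : Prop :=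
  w - algebraMap ℤ (MonoidAlgebra ℤ (FreeGroup (Fin n))) (augFree n w) =
    ∑ i : Fin n, d i * (MonoidAlgebra.of ℤ (FreeGroup (Fin n)) (FreeGroup.of i) - 1)

/-- A matrix `J : Fin n → Fin n → ℤF_n` is the Fox Jacobian of an endomorphism `α` of
`F_n` if its `i`-th row is the Fox gradient of `α(t_i)`. -/
def IsFoxJacobian (n : ℕ) (α : FreeGroup (Fin n) →* FreeGroup (Fin n))
    (J : Fin n → Fin n → MonoidAlgebra ℤ (FreeGroup (Fin n))) : Prop :=
  ∀ i : Fin n, IsFoxGradient n (MonoidAlgebra.of ℤ (FreeGroup (Fin n)) (α (FreeGroup.of i))) (J i)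

/-
Apply the ring homomorphism `β̃` to the fundamental formula for `α(tᵢ)`: it turns each factor
`tⱼ - 1` into `β(tⱼ) - 1`, which the formula for `β` expands as `∑ₖ J(β)ⱼₖ (tₖ - 1)`, and it
preserves the augmentation.
-/

open MonoidAlgebra

lemma MonoidAlgebra.mapDomainRingHom_of {R M N : Type*} [Semiring R] [Monoid M] [Monoid N]
    (f : M →* N) (m : M) : mapDomainRingHom R f (of R M m) = of R N (f m) := by
  simp [of_apply]

lemma augFree_of (n : ℕ) (g : FreeGroup (Fin n)) : augFree n (of ℤ _ g) = 1 := by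
  simp [augFree]

lemma augFree_mapDomainRingHom (n : ℕ) (β : FreeGroup (Fin n) →* FreeGroup (Fin n))
    (w : MonoidAlgebra ℤ (FreeGroup (Fin n))) :
    augFree n (mapDomainRingHom ℤ β w) = augFree n w := by
  induction w using MonoidAlgebra.induction_on with
  | of g => rw [mapDomainRingHom_of, augFree_of, augFree_of]
  | add x y hx hy => rw [map_add, map_add, hx, hy, map_add]
  | smul r x hx => rw [map_zsmul, map_zsmul, hx, map_zsmul]

lemma isFoxGradient_of_iff (n : ℕ) (g : FreeGroup (Fin n))
    (d : Fin n → MonoidAlgebra ℤ (FreeGroup (Fin n))) :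
    IsFoxGradient n (of ℤ _ g) d ↔
      of ℤ _ g - 1 = ∑ i : Fin n, d i * (of ℤ _ (FreeGroup.of i) - 1) := by
  rw [IsFoxGradient, augFree_of, map_one]

theorem IsFoxGradient.map {n : ℕ} {β : FreeGroup (Fin n) →* FreeGroup (Fin n)}
    {w : MonoidAlgebra ℤ (FreeGroup (Fin n))} {d : Fin n → MonoidAlgebra ℤ (FreeGroup (Fin n))}
    {Jβ : Fin n → Fin n → MonoidAlgebra ℤ (FreeGroup (Fin n))}
    (hw : IsFoxGradient n w d) (hβ : IsFoxJacobian n β Jβ) :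
    IsFoxGradient n (mapDomainRingHom ℤ β w)
      (fun k => ∑ j : Fin n, mapDomainRingHom ℤ β (d j) * Jβ j k) := by
  have hβ' := fun j => (isFoxGradient_of_iff n _ _).1 (hβ j)
  have hw' := congrArg (mapDomainRingHom ℤ β) hw
  simp only [map_sub, map_sum, map_mul, map_one, mapDomainRingHom_of, eq_intCast, map_intCast,
    hβ'] at hw'
  rw [IsFoxGradient, augFree_mapDomainRingHom, eq_intCast, hw']
  calc ∑ j, mapDomainRingHom ℤ β (d j) * ∑ k, Jβ j k * (of ℤ _ (FreeGroup.of k) - 1)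
      = ∑ k, ∑ j, mapDomainRingHom ℤ β (d j) * Jβ j k * (of ℤ _ (FreeGroup.of k) - 1) := by
        simp only [Finset.mul_sum, mul_assoc]
        exact Finset.sum_comm
    _ = _ := by simp only [Finset.sum_mul]

/-- Chain rule of Fox calculus: for endomorphisms `α, β` of `F_n` with Fox Jacobians
`J(α), J(β)`, the matrix `β̃(J(α))·J(β)` is the Fox Jacobian of `α·β = β∘α`, where
`β̃` is the ring-homomorphism extension of `β` to `ℤF_n`, applied entrywise. -/
theorem fox_calculus_chain_rule (n : ℕ)
    (α β : FreeGroup (Fin n) →* FreeGroup (Fin n))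
    (Jα Jβ : Fin n → Fin n → MonoidAlgebra ℤ (FreeGroup (Fin n)))
    (hα : IsFoxJacobian n α Jα) (hβ : IsFoxJacobian n β Jβ) :
    IsFoxJacobian n (β.comp α) (fun i k =>
      ∑ j : Fin n, MonoidAlgebra.mapDomainRingHom ℤ β (Jα i j) * Jβ j k) := by
  intro i
  have h := (hα i).map hβ
  rwa [mapDomainRingHom_of] at h
end

section
/- In the Koszul complex of the Laurent polynomial ring Λ (the standard free Λ-resolution of ℤ with C_k = Λ^{C(n,k)} and differentials d_k(e_J) = ∑_r (−1)^{k+r}(t_{j_r} − 1) e_{J∖{j_r}}), for an IA-automorphism α of F_n the maps Θ_k(α) = Λ^k Θ(α) form a chain map: d_k ∘ Θ_k(α) = Θ_{k−1}(α) ∘ d_k for all 1 ≤ k ≤ n. -/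
/-- An automorphism of `F_n` is an IA-automorphism if it induces the identity on the
abelianization `ℤ^n`. -/
def IsIA (n : ℕ) (α : MulAut (FreeGroup (Fin n))) : Prop :=
  ∀ x : FreeGroup (Fin n), Abelianization.of (α x) = Abelianization.of x

/-- The ring homomorphism `ℤF_n → Λ = ℤℤ^n` induced by abelianization. -/
noncomputable def abRing (n : ℕ) :
    MonoidAlgebra ℤ (FreeGroup (Fin n)) →+*
      MonoidAlgebra ℤ (Abelianization (FreeGroup (Fin n))) :=
  MonoidAlgebra.mapDomainRingHom ℤ (Abelianization.of (G := FreeGroup (Fin n)))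

/-- The image `t_i` of the `i`-th free generator in `Λ`. -/
noncomputable def tGen (n : ℕ) (i : Fin n) :
    MonoidAlgebra ℤ (Abelianization (FreeGroup (Fin n))) :=
  MonoidAlgebra.of ℤ (Abelianization (FreeGroup (Fin n))) (Abelianization.of (FreeGroup.of i))

/-- `KC n k` is the term `C_k = Λ^{C(n,k)}` of the Koszul complex of `Λ`, with basis
`e_J` indexed by `k`-element subsets `J ⊆ {1,…,n}`, realized in coordinates. -/
abbrev KC (n k : ℕ) :=
  {s : Finset (Fin n) // s.card = k} → MonoidAlgebra ℤ (Abelianization (FreeGroup (Fin n)))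

/-- The Koszul differential `d_{k+1} : C_{k+1} → C_k`, given on basis elements by
`d(e_J) = ∑_r (-1)^{|J|+r} (t_{j_r} - 1) e_{J∖{j_r}}` (here expressed on coordinates). -/
noncomputable def koszulD (n k : ℕ) (v : KC n (k + 1)) : KC n k := fun K =>
  ∑ j : Fin n, if h : j ∈ K.val then 0 else
    ((-1 : MonoidAlgebra ℤ (Abelianization (FreeGroup (Fin n)))) ^
        (k + (K.val.filter (· < j)).card)) * (tGen n j - 1) *
      v ⟨insert j K.val, by rw [Finset.card_insert_of_notMem h, K.2]⟩

/-- The `k`-th exterior power `Θ_k = Λ^k Θ` of an `n×n` matrix `Θ` over `Λ`, acting on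
`C_k` in coordinates: the matrix entry at `(J, K)` is the minor `det Θ[J, K]`. -/
noncomputable def extPow (n k : ℕ)
    (Θ : Fin n → Fin n → MonoidAlgebra ℤ (Abelianization (FreeGroup (Fin n))))
    (v : KC n k) : KC n k := fun K =>
  ∑ J : {s : Finset (Fin n) // s.card = k},
    (Matrix.of fun a b : Fin k =>
      Θ ((J.val.orderIsoOfFin J.2) a : Fin n) ((K.val.orderIsoOfFin K.2) b : Fin n)).det * v J


/-! The Fox fundamental formula pushed to `Λ`, together with `ε(α(x_i)) = 1` and the IA condition
`α(x_i) ≡ x_i` mod `[F_n, F_n]`, says that the Magnus matrix `Θ = Θ(α)` fixes the column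
`c = (t_i - 1)_i`. The Koszul differential is contraction with the linear form `e_j ↦ c_j`, and
`Λ^k Θ` commutes with contraction by any linear form fixed by `Θ`. In coordinates: expanding the
minor `det Θ[J, K ∪ {j}]` along the column `j` and summing against `c_j` produces
`(Θ c)_{j_r} = c_{j_r}` times the minors `det Θ[J ∖ {j_r}, K]`, and these are exactly the
coefficients of `Λ^{k-1} Θ ∘ d`, after reindexing the pairs `(J', j ∉ J')` by `(J' ∪ {j}, j)`. -/

namespace Finset

variable {α : Type*} [LinearOrder α]

theorem card_filter_lt_orderEmbOfFin (s : Finset α) {k : ℕ} (h : s.card = k) (a : Fin k) :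
    (s.filter (· < s.orderEmbOfFin h a)).card = a := by
  have himage :
      s.filter (· < s.orderEmbOfFin h a) = (Iio a).map (s.orderEmbOfFin h).toEmbedding := by
    ext x
    simp only [mem_filter, mem_map, mem_Iio, RelEmbedding.coe_toEmbedding]
    constructor
    · rintro ⟨hx, hlt⟩
      obtain ⟨b, rfl⟩ : x ∈ Set.range (s.orderEmbOfFin h) := by simpa using hx
      exact ⟨b, (s.orderEmbOfFin h).lt_iff_lt.mp hlt, rfl⟩
    · rintro ⟨b, hb, rfl⟩
      exact ⟨s.orderEmbOfFin_mem h b, (s.orderEmbOfFin h).lt_iff_lt.mpr hb⟩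
  rw [himage, card_map, Fin.card_Iio]

theorem orderEmbOfFin_erase {m : ℕ} (s : Finset α) (h : s.card = m + 1) (a : Fin (m + 1))
    (h' : (s.erase (s.orderEmbOfFin h a)).card = m) :
    ⇑((s.erase (s.orderEmbOfFin h a)).orderEmbOfFin h') = s.orderEmbOfFin h ∘ a.succAbove :=
  (orderEmbOfFin_unique h'
    (fun b => mem_erase.mpr
      ⟨(s.orderEmbOfFin h).injective.ne (a.succAbove_ne b), s.orderEmbOfFin_mem h _⟩)
    ((s.orderEmbOfFin h).strictMono.comp a.strictMono_succAbove)).symm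

theorem orderEmbOfFin_insert {m : ℕ} {s : Finset α} (hs : s.card = m) {j : α}
    (h : (insert j s).card = m + 1) :
    ⇑((insert j s).orderEmbOfFin h) =
      Fin.insertNth
        ⟨(s.filter (· < j)).card, Nat.lt_succ_of_le ((card_filter_le _ _).trans_eq hs)⟩
        j (s.orderEmbOfFin hs) := by
  set e := (insert j s).orderEmbOfFin h
  obtain ⟨a, ha⟩ : j ∈ Set.range e := by simp [e]
  obtain rfl : a = ⟨(s.filter (· < j)).card,
      Nat.lt_succ_of_le ((card_filter_le _ _).trans_eq hs)⟩ := by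
    ext
    rw [← card_filter_lt_orderEmbOfFin _ h a, ha, filter_insert, if_neg (lt_irrefl j)]
  refine (Fin.insertNth_eq_iff.mpr ⟨ha.symm, (orderEmbOfFin_unique hs (fun b => ?_)
    (e.strictMono.comp (Fin.strictMono_succAbove _))).symm⟩).symm
  exact (mem_insert.mp (orderEmbOfFin_mem _ h _)).resolve_left
    fun hb => e.injective.ne (Fin.succAbove_ne _ b) (hb.trans ha.symm)

end Finset

open Finset

section Subsets

variable {ι : Type*} [LinearOrder ι]

abbrev eraseNth {m : ℕ} (t : {s : Finset ι // s.card = m + 1}) (x : Fin (m + 1)) :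
    {s : Finset ι // s.card = m} :=
  ⟨t.1.erase (t.1.orderEmbOfFin t.2 x), by
    rw [card_erase_of_mem (orderEmbOfFin_mem _ _ _), t.2, Nat.add_sub_cancel]⟩

theorem sum_sum_eq_sum_sum_eraseNth [Fintype ι] {M : Type*} [AddCommMonoid M] {m : ℕ}
    (f : {s : Finset ι // s.card = m} → ι → M) (hf : ∀ s, ∀ j ∈ s.1, f s j = 0) :
    ∑ s, ∑ j, f s j = ∑ t : {s : Finset ι // s.card = m + 1}, ∑ x,
      f (eraseNth t x) (t.1.orderEmbOfFin t.2 x) := by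
  calc ∑ s, ∑ j, f s j = ∑ s, ∑ j ∈ s.1ᶜ, f s j :=
        sum_congr rfl fun s _ =>
          (sum_subset (subset_univ _) fun j _ hj => hf s j (by simpa using hj)).symm
    _ = ∑ p ∈ univ.sigma fun s : {s : Finset ι // s.card = m} => s.1ᶜ, f p.1 p.2 := by
        rw [sum_sigma]
    _ = ∑ q ∈ univ.sigma
          fun _ : {s : Finset ι // s.card = m + 1} => (univ : Finset (Fin (m + 1))),
          f (eraseNth q.1 q.2) (q.1.1.orderEmbOfFin q.1.2 q.2) := by
        refine (sum_bij (fun q _ => ⟨eraseNth q.1 q.2, q.1.1.orderEmbOfFin q.1.2 q.2⟩)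
          ?_ ?_ ?_ fun _ _ => rfl).symm
        · rintro ⟨t, x⟩ -
          exact mem_sigma.mpr ⟨mem_univ _, mem_compl.mpr (notMem_erase _ _)⟩
        · rintro ⟨t, x⟩ - ⟨t', x'⟩ - h
          obtain ⟨hs, ha⟩ := Sigma.mk.inj_iff.mp h
          replace ha := eq_of_heq ha
          dsimp only at hs ha
          obtain rfl : t = t' := Subtype.ext <| by
            have h := congrArg (insert (t.1.orderEmbOfFin t.2 x)) (congrArg Subtype.val hs)
            rwa [insert_erase (orderEmbOfFin_mem _ _ _), ha,
              insert_erase (orderEmbOfFin_mem _ _ _)] at h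
          rw [(t.1.orderEmbOfFin t.2).injective ha]
        · rintro ⟨s, j⟩ hj
          have hjs : j ∉ s.1 := mem_compl.mp (mem_sigma.mp hj).2
          let t : {s : Finset ι // s.card = m + 1} :=
            ⟨insert j s.1, by rw [card_insert_of_notMem hjs, s.2]⟩
          obtain ⟨x, hx⟩ : j ∈ Set.range (t.1.orderEmbOfFin t.2) := by simp [t]
          refine ⟨⟨t, x⟩, mem_sigma.mpr ⟨mem_univ _, mem_univ _⟩, Sigma.mk.inj_iff.mpr
            ⟨Subtype.ext ?_, heq_of_eq hx⟩⟩
          change t.1.erase _ = s.1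
          rw [hx, erase_insert hjs]
    _ = _ := by rw [sum_sigma]

end Subsets

namespace Matrix

variable {R ι : Type*} [CommRing R]

theorem det_submatrix_insertNth_column {m : ℕ} (Θ : Matrix ι ι R) (r : Fin (m + 1) → ι)
    (p : Fin (m + 1)) (j : ι) (s : Fin m → ι) :
    (Θ.submatrix r (Fin.insertNth p j s)).det =
      ∑ x : Fin (m + 1), (-1) ^ (x + p : ℕ) * Θ (r x) j *
        (Θ.submatrix (r ∘ x.succAbove) s).det := by
  rw [det_succ_column _ p]
  simp [submatrix_submatrix]

theorem sum_neg_one_pow_mul_det_submatrix_insertNth [Fintype ι] {m : ℕ} (Θ : Matrix ι ι R)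
    (c : ι → R) (hc : Θ *ᵥ c = c) (r : Fin (m + 1) → ι) (s : Fin m → ι)
    (p : ι → Fin (m + 1)) :
    ∑ j, (-1) ^ (p j : ℕ) * c j * (Θ.submatrix r (Fin.insertNth (p j) j s)).det =
      ∑ x : Fin (m + 1), (-1) ^ (x : ℕ) * c (r x) *
        (Θ.submatrix (r ∘ x.succAbove) s).det := by
  have hsign : ∀ a b : ℕ, (-1 : R) ^ a * (-1) ^ (b + a) = (-1) ^ b := fun a b => by
    rw [pow_add, mul_left_comm, ← mul_pow, neg_one_mul, neg_neg, one_pow, mul_one]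
  calc ∑ j, (-1) ^ (p j : ℕ) * c j * (Θ.submatrix r (Fin.insertNth (p j) j s)).det
      = ∑ x : Fin (m + 1), ∑ j,
          (-1) ^ (x : ℕ) * (Θ (r x) j * c j) * (Θ.submatrix (r ∘ x.succAbove) s).det := by
        simp_rw [det_submatrix_insertNth_column, mul_sum]
        rw [sum_comm]
        refine sum_congr rfl fun x _ => sum_congr rfl fun j _ => ?_
        rw [← hsign (p j) x]
        ring
    _ = _ := by
        refine sum_congr rfl fun x _ => ?_
        rw [← sum_mul, ← mul_sum, ← congrFun hc (r x)]
        rfl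

end Matrix

section Koszul

open Matrix

variable {R ι : Type*} [CommRing R] [Fintype ι] [LinearOrder ι]

/-- Contraction `C_{k+1} → C_k` with the linear form `e_j ↦ c j`, in the coordinates of `KC`;
`koszulD n k` is the case `c j = t_j - 1`. -/
noncomputable def koszulDiff (c : ι → R) (k : ℕ)
    (v : {s : Finset ι // s.card = k + 1} → R) : {s : Finset ι // s.card = k} → R := fun K =>
  ∑ j, if h : j ∈ K.1 then 0 else
    (-1) ^ (k + (K.1.filter (· < j)).card) * c j *
      v ⟨insert j K.1, by rw [card_insert_of_notMem h, K.2]⟩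

noncomputable def exteriorPowerMap (Θ : Matrix ι ι R) (k : ℕ)
    (v : {s : Finset ι // s.card = k} → R) : {s : Finset ι // s.card = k} → R := fun K =>
  ∑ J, (Θ.submatrix (J.1.orderEmbOfFin J.2) (K.1.orderEmbOfFin K.2)).det * v J

theorem sum_dite_mul_det_submatrix_insert (Θ : Matrix ι ι R) (c : ι → R) (hc : Θ *ᵥ c = c)
    {m : ℕ} (J : {s : Finset ι // s.card = m + 1}) (K : {s : Finset ι // s.card = m}) :
    ∑ j, (if h : j ∈ K.1 then 0 else
        (-1) ^ (m + (K.1.filter (· < j)).card) * c j *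
          (Θ.submatrix (J.1.orderEmbOfFin J.2)
            ((insert j K.1).orderEmbOfFin (by rw [card_insert_of_notMem h, K.2]))).det) =
      ∑ x : Fin (m + 1), (-1) ^ (m + x : ℕ) * c (J.1.orderEmbOfFin J.2 x) *
        (Θ.submatrix (J.1.orderEmbOfFin J.2 ∘ x.succAbove) (K.1.orderEmbOfFin K.2)).det := by
  let p : ι → Fin (m + 1) := fun j =>
    ⟨(K.1.filter (· < j)).card, Nat.lt_succ_of_le ((card_filter_le _ _).trans_eq K.2)⟩
  -- Inserting the column `j` at position `p j` gives `Θ[J, K ∪ {j}]` for `j ∉ K`, and a matrix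
  -- with a repeated column for `j ∈ K`.
  trans ∑ j, (-1) ^ m * ((-1) ^ (p j : ℕ) * c j *
    (Θ.submatrix (J.1.orderEmbOfFin J.2) (Fin.insertNth (p j) j (K.1.orderEmbOfFin K.2))).det)
  · refine sum_congr rfl fun j _ => ?_
    split_ifs with hj
    · obtain ⟨q, hq⟩ : j ∈ Set.range (K.1.orderEmbOfFin K.2) := by simpa using hj
      rw [det_zero_of_column_eq ((p j).succAbove_ne q).symm fun x => by simp [hq],
        mul_zero, mul_zero]
    · rw [orderEmbOfFin_insert K.2, pow_add]
      ring
  · simp_rw [← mul_sum, sum_neg_one_pow_mul_det_submatrix_insertNth Θ c hc, mul_sum]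
    exact sum_congr rfl fun x _ => by ring

theorem koszulDiff_exteriorPowerMap_apply (Θ : Matrix ι ι R) (c : ι → R) (hc : Θ *ᵥ c = c)
    {m : ℕ} (v : {s : Finset ι // s.card = m + 1} → R) (K : {s : Finset ι // s.card = m}) :
    koszulDiff c m (exteriorPowerMap Θ (m + 1) v) K =
      ∑ J, (∑ x : Fin (m + 1), (-1) ^ (m + x : ℕ) * c (J.1.orderEmbOfFin J.2 x) *
        (Θ.submatrix (J.1.orderEmbOfFin J.2 ∘ x.succAbove) (K.1.orderEmbOfFin K.2)).det) *
          v J := by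
  simp_rw [← sum_dite_mul_det_submatrix_insert Θ c hc, sum_mul]
  rw [sum_comm]
  refine sum_congr rfl fun j _ => ?_
  unfold exteriorPowerMap
  split_ifs <;> simp [mul_sum, mul_assoc]

theorem exteriorPowerMap_koszulDiff_apply (Θ : Matrix ι ι R) (c : ι → R)
    {m : ℕ} (v : {s : Finset ι // s.card = m + 1} → R) (K : {s : Finset ι // s.card = m}) :
    exteriorPowerMap Θ m (koszulDiff c m v) K =
      ∑ J, (∑ x : Fin (m + 1), (-1) ^ (m + x : ℕ) * c (J.1.orderEmbOfFin J.2 x) *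
        (Θ.submatrix (J.1.orderEmbOfFin J.2 ∘ x.succAbove) (K.1.orderEmbOfFin K.2)).det) *
          v J := by
  unfold exteriorPowerMap koszulDiff
  simp_rw [mul_sum]
  rw [sum_sum_eq_sum_sum_eraseNth _ fun s j hj => by simp [hj]]
  refine sum_congr rfl fun J _ => ?_
  rw [sum_mul]
  refine sum_congr rfl fun x _ => ?_
  have hrank :
      ((J.1.erase (J.1.orderEmbOfFin J.2 x)).filter (· < J.1.orderEmbOfFin J.2 x)).card = x := by
    rw [filter_erase, erase_eq_of_notMem (by simp), card_filter_lt_orderEmbOfFin]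
  have hinsert : (⟨insert (J.1.orderEmbOfFin J.2 x) (J.1.erase (J.1.orderEmbOfFin J.2 x)),
      by rw [insert_erase (orderEmbOfFin_mem _ _ _), J.2]⟩ : {s : Finset ι // s.card = m + 1}) =
      J :=
    Subtype.ext (insert_erase (orderEmbOfFin_mem _ _ _))
  dsimp only [eraseNth]
  rw [dif_neg (notMem_erase _ _), orderEmbOfFin_erase, hrank, hinsert]
  ring

theorem koszulDiff_exteriorPowerMap (Θ : Matrix ι ι R) (c : ι → R) (hc : Θ *ᵥ c = c)
    (m : ℕ) (v : {s : Finset ι // s.card = m + 1} → R) :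
    koszulDiff c m (exteriorPowerMap Θ (m + 1) v) = exteriorPowerMap Θ m (koszulDiff c m v) :=
  funext fun K => by
    rw [koszulDiff_exteriorPowerMap_apply Θ c hc, exteriorPowerMap_koszulDiff_apply]

end Koszul

section Magnus

open Matrix

theorem IsFoxGradient.sum_abRing_mul_tGen_sub_one {n : ℕ} {g : FreeGroup (Fin n)}
    {d : Fin n → MonoidAlgebra ℤ (FreeGroup (Fin n))}
    (h : IsFoxGradient n (MonoidAlgebra.of ℤ _ g) d) :
    ∑ i, abRing n (d i) * (tGen n i - 1) = MonoidAlgebra.of ℤ _ (Abelianization.of g) - 1 := by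
  have haug : augFree n (MonoidAlgebra.of ℤ _ g) = 1 := by
    rw [augFree, MonoidAlgebra.lift_of]
    rfl
  have habRing : ∀ g', abRing n (MonoidAlgebra.of ℤ _ g') =
      MonoidAlgebra.of ℤ _ (Abelianization.of g') := fun g' => by
    simp [abRing, MonoidAlgebra.of_apply]
  have h' := congrArg (abRing n) h
  rw [haug, map_one, map_sub, map_one, habRing, map_sum] at h'
  simp only [map_mul, map_sub, map_one, habRing] at h'
  exact h'.symm

theorem IsFoxJacobian.abRing_mulVec_tGen_sub_one {n : ℕ} {α : MulAut (FreeGroup (Fin n))}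
    (hα : IsIA n α) {J : Fin n → Fin n → MonoidAlgebra ℤ (FreeGroup (Fin n))}
    (hJ : IsFoxJacobian n α.toMonoidHom J) :
    Matrix.map J (abRing n) *ᵥ (fun j => tGen n j - 1) = fun j => tGen n j - 1 :=
  funext fun i => by
  have h := (hJ i).sum_abRing_mul_tGen_sub_one
  rw [MulEquiv.coe_toMonoidHom, hα] at h
  exact h

end Magnus

/-- For an IA-automorphism `α` of `F_n` with Magnus representation `Θ(α)`, the exterior
powers `Θ_k(α) = Λ^k Θ(α)` form a chain map of the Koszul complex of `Λ`:
`d_k ∘ Θ_k(α) = Θ_{k-1}(α) ∘ d_k` for all `1 ≤ k ≤ n`. -/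
theorem magnus_extPow_chain_map (n : ℕ) (α : MulAut (FreeGroup (Fin n)))
    (hα : IsIA n α)
    (J : Fin n → Fin n → MonoidAlgebra ℤ (FreeGroup (Fin n)))
    (hJ : IsFoxJacobian n α.toMonoidHom J) :
    ∀ m : ℕ, m + 1 ≤ n → ∀ v : KC n (m + 1),
      koszulD n m (extPow n (m + 1) (fun i j => abRing n (J i j)) v) =
        extPow n m (fun i j => abRing n (J i j)) (koszulD n m v) :=
  fun m _ v => koszulDiff_exteriorPowerMap _ _ (hJ.abRing_mulVec_tGen_sub_one hα) m v
end
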